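/- Let A, B ∈ ℝ^{n×n}. Then A and B are permutationally similar if and only if: (a) the diagonal entries of A and B agree as multisets and the off-diagonal entries agree as multisets, and (b) for some (equivalently, any) t ∈ ℝ with t ≠ a_{ij} − a_{kk} for all i ≠ j and all k, there exists Z ∈ Ψ_{n,n} with Z·vec(A + tI) = vec(B + tI). -/

import Mathlib

/-
The vertices `P_σ ⊗ P_τ` of `Ψ_{n,n}` act on `vec M` by permuting its entries, so they preserve the
Euclidean norm, and condition (a) makes `vec (A + tI)` and `vec (B + tI)` equally long. In a strictly
convex space a point of the sphere that is a convex combination of points of the closed ball is one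
of them, so `B + tI = (A + tI).submatrix τ σ` for some `σ, τ`. On the diagonal, `τ a ≠ σ a` would give
`b_{aa} + t = a_{τa,σa}` with `b_{aa}` some `a_{kk}`, which the choice of `t` excludes; hence `τ = σ`.
-/

open Matrix Kronecker Finset

/-- `Ψ_{m,n}`: the convex hull of Kronecker products of permutation matrices. -/
def Psi (m n : ℕ) : Set (Matrix (Fin m × Fin n) (Fin m × Fin n) ℝ) :=
  convexHull ℝ {C | ∃ σ : Equiv.Perm (Fin m), ∃ τ : Equiv.Perm (Fin n),
    C = (σ.permMatrix ℝ) ⊗ₖ (τ.permMatrix ℝ)}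

/-- `vec`: stacking the columns of a square matrix. -/
def vec (n : ℕ) (M : Matrix (Fin n) (Fin n) ℝ) : Fin n × Fin n → ℝ :=
  fun p => M p.2 p.1

open Metric in
theorem mem_of_mem_convexHull_of_norm_le {E : Type*} [NormedAddCommGroup E] [NormedSpace ℝ E]
    [StrictConvexSpace ℝ E] {s : Set E} {y : E} (hy : y ∈ convexHull ℝ s)
    (hs : ∀ v ∈ s, ‖v‖ ≤ ‖y‖) : y ∈ s := by
  have hball : convexHull ℝ s ⊆ closedBall 0 ‖y‖ :=
    convexHull_min (fun v hv => mem_closedBall_zero_iff.2 (hs v hv)) (convex_closedBall 0 _)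
  have hext : y ∈ (closedBall (0 : E) ‖y‖).extremePoints ℝ := by
    rcases eq_or_ne ‖y‖ 0 with h | h
    · rw [h, closedBall_zero, extremePoints_singleton]
      exact norm_eq_zero.1 h
    · exact StrictConvexSpace.sphere_subset_extremePoints_closedBall 0 h (by simp)
  exact extremePoints_convexHull_subset
    (inter_extremePoints_subset_extremePoints_of_subset hball ⟨hy, hext⟩)

theorem EuclideanSpace.norm_toLp_comp_equiv {ι : Type*} [Fintype ι] (x : ι → ℝ) (e : ι ≃ ι) :
    ‖WithLp.toLp 2 (x ∘ e)‖ = ‖WithLp.toLp 2 x‖ := by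
  simp only [EuclideanSpace.norm_eq, Function.comp_apply, e.sum_comp fun i => ‖x i‖ ^ 2]

namespace Matrix

theorem kronecker_permMatrix {m n R : Type*} [DecidableEq m] [DecidableEq n] [MulZeroOneClass R]
    (σ : Equiv.Perm m) (τ : Equiv.Perm n) :
    σ.permMatrix R ⊗ₖ τ.permMatrix R = Equiv.Perm.permMatrix R (σ.prodCongr τ) := by
  ext ⟨i, j⟩ ⟨k, l⟩
  simp only [kroneckerMap_apply, PEquiv.toMatrix_apply, Equiv.toPEquiv_apply, Option.mem_def,
    Option.some.injEq, Equiv.prodCongr_apply, Prod.map, Prod.ext_iff, ite_and, mul_ite, mul_one,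
    mul_zero]
  split_ifs <;> rfl

theorem permMatrix_mul_mul_transpose {ι R : Type*} [Fintype ι] [DecidableEq ι]
    [NonAssocSemiring R] (σ : Equiv.Perm ι) (A : Matrix ι ι R) :
    σ.permMatrix R * A * (σ.permMatrix R)ᵀ = A.submatrix σ σ := by
  rw [transpose_permMatrix, PEquiv.toMatrix_toPEquiv_mul, PEquiv.mul_toMatrix_toPEquiv]
  rfl

theorem submatrix_add_smul_one {ι R : Type*} [DecidableEq ι] [Semiring R] (A : Matrix ι ι R)
    (σ : Equiv.Perm ι) (t : R) : (A + t • 1).submatrix σ σ = A.submatrix σ σ + t • 1 := by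
  ext i j
  simp [Matrix.one_apply]

end Matrix

section Entries

variable {ι α : Type*} [Fintype ι]

def diagEntries (A : Matrix ι ι α) : Multiset α :=
  univ.val.map fun i => A i i

def offDiagEntries [DecidableEq ι] (A : Matrix ι ι α) : Multiset α :=
  (univ.filter fun p : ι × ι => p.1 ≠ p.2).val.map fun p => A p.1 p.2

theorem diagEntries_submatrix (A : Matrix ι ι α) (σ : Equiv.Perm ι) :
    diagEntries (A.submatrix σ σ) = diagEntries A :=
  calc diagEntries (A.submatrix σ σ) = (univ.val.map σ).map fun i => A i i :=
        (Multiset.map_map (fun i => A i i) σ univ.val).symm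
    _ = diagEntries A := by rw [Multiset.map_univ_val_equiv]; rfl

theorem offDiagEntries_submatrix [DecidableEq ι] (A : Matrix ι ι α) (σ : Equiv.Perm ι) :
    offDiagEntries (A.submatrix σ σ) = offDiagEntries A := by
  have h : (univ.filter fun p : ι × ι => p.1 ≠ p.2).map (σ.prodCongr σ).toEmbedding =
      univ.filter fun p : ι × ι => p.1 ≠ p.2 := by
    rw [Finset.map_filter, Finset.map_univ_equiv]
    simp
  calc offDiagEntries (A.submatrix σ σ)
      = (((univ.filter fun p : ι × ι => p.1 ≠ p.2).map (σ.prodCongr σ).toEmbedding).val.map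
          fun p => A p.1 p.2) := by
        rw [Finset.map_val, Multiset.map_map]; rfl
    _ = offDiagEntries A := by rw [h]; rfl

theorem sum_comp_add_smul_one [DecidableEq ι] (A : Matrix ι ι ℝ) (t : ℝ) (g : ℝ → ℝ) :
    ∑ p : ι × ι, g ((A + t • 1) p.1 p.2) =
      ((offDiagEntries A).map g).sum + ((diagEntries A).map fun a => g (a + t)).sum := by
  rw [← Finset.sum_filter_add_sum_filter_not univ fun p : ι × ι => p.1 ≠ p.2]
  congr 1
  · rw [offDiagEntries, Multiset.map_map]
    exact Finset.sum_congr rfl fun p hp => by simp [(Finset.mem_filter.1 hp).2]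
  · rw [diagEntries, Multiset.map_map, Finset.sum_filter]
    simp [Fintype.sum_prod_type, Matrix.one_apply]

end Entries

def IsAdmissibleShift {ι : Type*} (A : Matrix ι ι ℝ) (t : ℝ) : Prop :=
  ∀ i j k, i ≠ j → t ≠ A i j - A k k

theorem exists_isAdmissibleShift {ι : Type*} [Finite ι] (A : Matrix ι ι ℝ) :
    ∃ t, IsAdmissibleShift A t := by
  have : Fintype ι := Fintype.ofFinite ι
  obtain ⟨t, ht⟩ := Infinite.exists_notMem_finset
    (univ.image fun q : ι × ι × ι => A q.1 q.2.1 - A q.2.2 q.2.2)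
  exact ⟨t, fun i j k _ h => ht (h ▸ Finset.mem_image_of_mem _ (Finset.mem_univ (i, j, k)))⟩

theorem eq_of_add_smul_one_eq_submatrix {ι : Type*} [Fintype ι] [DecidableEq ι]
    {A B : Matrix ι ι ℝ} {t : ℝ} (ht : IsAdmissibleShift A t)
    (hdiag : diagEntries A = diagEntries B) {σ τ : Equiv.Perm ι}
    (h : B + t • 1 = (A + t • 1).submatrix τ σ) : τ = σ := by
  ext a
  by_contra hne
  have haa : B a a + t = A (τ a) (σ a) := by
    simpa [Matrix.one_apply, hne] using congrFun (congrFun h a) a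
  have hBaa : B a a ∈ diagEntries A := hdiag ▸ Multiset.mem_map_of_mem _ (mem_univ_val a)
  obtain ⟨k, -, hk⟩ := Multiset.mem_map.1 hBaa
  exact ht (τ a) (σ a) k hne (by linarith)

theorem vec_injective (n : ℕ) : Function.Injective (vec n) := fun _ _ h =>
  Matrix.ext fun i j => congrFun h (j, i)

theorem vec_comp_prodCongr {n : ℕ} (M : Matrix (Fin n) (Fin n) ℝ) (σ τ : Equiv.Perm (Fin n)) :
    vec n M ∘ σ.prodCongr τ = vec n (M.submatrix τ σ) := rfl

theorem norm_toLp_vec_add_smul_one_eq {n : ℕ} {A B : Matrix (Fin n) (Fin n) ℝ}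
    (hdiag : diagEntries A = diagEntries B) (hoff : offDiagEntries A = offDiagEntries B) (t : ℝ) :
    ‖WithLp.toLp 2 (vec n (A + t • 1))‖ = ‖WithLp.toLp 2 (vec n (B + t • 1))‖ := by
  have hvec : ∀ M, vec n M = (fun p => M p.1 p.2) ∘ Equiv.prodComm _ _ := fun _ => rfl
  rw [hvec, hvec, EuclideanSpace.norm_toLp_comp_equiv, EuclideanSpace.norm_toLp_comp_equiv,
    EuclideanSpace.norm_eq, EuclideanSpace.norm_eq,
    sum_comp_add_smul_one A t fun a => ‖a‖ ^ 2, sum_comp_add_smul_one B t fun a => ‖a‖ ^ 2,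
    hdiag, hoff]

theorem exists_comp_prodCongr_eq_of_mem_Psi {m n : ℕ}
    {Z : Matrix (Fin m × Fin n) (Fin m × Fin n) ℝ} (hZ : Z ∈ Psi m n)
    {x y : Fin m × Fin n → ℝ} (hZxy : Z *ᵥ x = y)
    (hxy : ‖WithLp.toLp 2 x‖ ≤ ‖WithLp.toLp 2 y‖) :
    ∃ σ τ, x ∘ Equiv.prodCongr σ τ = y := by
  let f := (WithLp.linearEquiv 2 ℝ (Fin m × Fin n → ℝ)).symm.toLinearMap ∘ₗ
    (mulVecBilin ℝ ℝ).flip x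
  have hf : ∀ M, f M = WithLp.toLp 2 (M *ᵥ x) := fun _ => rfl
  have hy := Set.mem_image_of_mem f hZ
  rw [Psi, f.image_convexHull, hf, hZxy] at hy
  obtain ⟨_, ⟨σ, τ, rfl⟩, h⟩ := mem_of_mem_convexHull_of_norm_le hy (by
    rintro _ ⟨_, ⟨σ, τ, rfl⟩, rfl⟩
    rwa [hf, kronecker_permMatrix, permMatrix_mulVec, EuclideanSpace.norm_toLp_comp_equiv])
  rw [hf, kronecker_permMatrix, permMatrix_mulVec] at h
  exact ⟨σ, τ, WithLp.toLp_injective 2 h⟩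

/-- `A` and `B` are permutationally similar iff their diagonal and off-diagonal entries
agree as multisets and, for every admissible `t`, some `Z ∈ Ψ_{n,n}` satisfies
`Z · vec(A + tI) = vec(B + tI)`. -/
theorem perm_similar_iff_lp (n : ℕ) (A B : Matrix (Fin n) (Fin n) ℝ) :
    (∃ P : Equiv.Perm (Fin n), B = P.permMatrix ℝ * A * (P.permMatrix ℝ)ᵀ) ↔
    (((Finset.univ.val.map fun i : Fin n => A i i) =
        (Finset.univ.val.map fun i : Fin n => B i i)) ∧
     (((Finset.univ.filter fun p : Fin n × Fin n => p.1 ≠ p.2).val.map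
          fun p => A p.1 p.2) =
        ((Finset.univ.filter fun p : Fin n × Fin n => p.1 ≠ p.2).val.map
          fun p => B p.1 p.2)) ∧
     ∀ t : ℝ, (∀ i j k : Fin n, i ≠ j → t ≠ A i j - A k k) →
       ∃ Z ∈ Psi n n, Z.mulVec (vec n (A + t • 1)) = vec n (B + t • 1)) := by
  simp_rw [permMatrix_mul_mul_transpose]
  constructor
  · rintro ⟨σ, rfl⟩
    refine ⟨(diagEntries_submatrix A σ).symm, (offDiagEntries_submatrix A σ).symm,
      fun t _ => ⟨_, subset_convexHull ℝ _ ⟨σ, σ, rfl⟩, ?_⟩⟩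
    rw [kronecker_permMatrix, permMatrix_mulVec, vec_comp_prodCongr, submatrix_add_smul_one]
  · rintro ⟨hdiag, hoff, hlp⟩
    obtain ⟨t, ht⟩ := exists_isAdmissibleShift A
    obtain ⟨Z, hZ, hZAB⟩ := hlp t ht
    obtain ⟨σ, τ, hστ⟩ := exists_comp_prodCongr_eq_of_mem_Psi hZ hZAB
      (norm_toLp_vec_add_smul_one_eq hdiag hoff t).le
    have hBA := vec_injective n (hστ.symm.trans (vec_comp_prodCongr _ σ τ))
    obtain rfl := eq_of_add_smul_one_eq_submatrix ht hdiag hBA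
    exact ⟨τ, add_right_cancel (hBA.trans (submatrix_add_smul_one A τ t))⟩
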